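/- arXiv:1902.06845 — 5 statements merged into one kernel-verified Lean document; each statement's English description precedes it below -/
import Mathlib

section
/- Let x, α be real numbers with 0 < x ≤ π/2, 0 ≤ α, and α + x/2 < π/2. Then cot²(α + x/2) ≥ cot²(x)·(1 + sec²(α + x/2)) if and only if sin²(x/2) ≥ sin(x+α)·sin(α). -/
/-!
With `θ = α + x/2`, both inequalities are equivalent to `cos x ≤ cos² θ`. On the right,
`sin (x + α) sin α = sin (θ + x/2) sin (θ - x/2) = sin² θ - sin² (x/2)` and `1 - cos x = 2 sin² (x/2)`.
On the left, clearing denominators leaves `cos⁴ θ ≥ cos² x`, and both `cos x` and `cos² θ` are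
nonnegative.
-/

open Real

theorem sin_add_mul_sin_sub (a b : ℝ) : sin (a + b) * sin (a - b) = sin a ^ 2 - sin b ^ 2 := by
  rw [sin_add, sin_sub]
  linear_combination sin a ^ 2 * sin_sq_add_cos_sq b - sin b ^ 2 * sin_sq_add_cos_sq a

theorem sin_sq_half_ge_sin_add_mul_sin_iff (x α : ℝ) :
    sin (x / 2) ^ 2 ≥ sin (x + α) * sin α ↔ cos x ≤ cos (α + x / 2) ^ 2 := by
  have hprod : sin (x + α) * sin α = sin (α + x / 2) ^ 2 - sin (x / 2) ^ 2 := by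
    rw [← sin_add_mul_sin_sub]
    ring_nf
  have hhalf : sin (x / 2) ^ 2 = 1 / 2 - cos x / 2 := by
    rw [sin_sq_eq_half_sub, mul_div_cancel₀ x two_ne_zero]
  rw [hprod, hhalf, sin_sq (α + x / 2)]
  constructor <;> intro h <;> linarith

theorem cot_sq_ge_cot_sq_mul_one_add_sec_sq_iff {x θ : ℝ} (hsx : sin x ≠ 0) (hcx : 0 ≤ cos x)
    (hsθ : sin θ ≠ 0) (hcθ : cos θ ≠ 0) :
    (cos θ / sin θ) ^ 2 ≥ (cos x / sin x) ^ 2 * (1 + (1 / cos θ) ^ 2) ↔ cos x ≤ cos θ ^ 2 := by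
  have hden : 0 < sin θ ^ 2 * cos θ ^ 2 * sin x ^ 2 := by positivity
  have hdiff : (cos θ / sin θ) ^ 2 - (cos x / sin x) ^ 2 * (1 + (1 / cos θ) ^ 2)
      = ((cos θ ^ 2) ^ 2 - cos x ^ 2) / (sin θ ^ 2 * cos θ ^ 2 * sin x ^ 2) := by
    field_simp
    rw [sin_sq θ, sin_sq x]
    ring
  rw [ge_iff_le, ← sub_nonneg, hdiff, le_div_iff₀ hden, zero_mul, sub_nonneg,
    pow_le_pow_iff_left₀ hcx (sq_nonneg _) two_ne_zero]

/-- For `0 < x ≤ π/2`, `0 ≤ α`, `α + x/2 < π/2`: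
`cot²(α + x/2) ≥ cot²(x)·(1 + sec²(α + x/2))` iff `sin²(x/2) ≥ sin(x+α)·sin α`,
with `cot y = cos y / sin y` and `sec y = 1 / cos y`. -/
theorem central_point_iff_connected_wedge (x α : ℝ)
    (hx : 0 < x) (hx' : x ≤ π / 2) (hα : 0 ≤ α) (hθ : α + x / 2 < π / 2) :
    (cos (α + x / 2) / sin (α + x / 2)) ^ 2 ≥
      (cos x / sin x) ^ 2 * (1 + (1 / cos (α + x / 2)) ^ 2) ↔
    sin (x / 2) ^ 2 ≥ sin (x + α) * sin α := by
  have hsx : sin x ≠ 0 := (sin_pos_of_pos_of_lt_pi hx (by linarith [pi_pos])).ne'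
  have hcx : 0 ≤ cos x := cos_nonneg_of_mem_Icc ⟨by linarith [pi_pos], hx'⟩
  have hsθ : sin (α + x / 2) ≠ 0 :=
    (sin_pos_of_pos_of_lt_pi (by linarith) (by linarith [pi_pos])).ne'
  have hcθ : cos (α + x / 2) ≠ 0 := (cos_pos_of_mem_Ioo ⟨by linarith [pi_pos], hθ⟩).ne'
  rw [cot_sq_ge_cot_sq_mul_one_add_sec_sq_iff hsx hcx hsθ hcθ,
    sin_sq_half_ge_sin_add_mul_sin_iff]
end

section
/- Let ℓ be a real number with −1 < ℓ < 1 and ℓ ≠ 0, and let t₀, φ₀ be real constants. Define for λ ∈ ℝ: t(λ) = t₀ + π/2 + arctan(λ(1−ℓ²)), φ(λ) = φ₀ + π/2 + arctan(λ(1−ℓ²)/ℓ), and u(λ) = √(λ²(1−ℓ²) + 1/(1−ℓ²)). Then for every λ ∈ ℝ: −u(λ)²·(t′(λ))² + (u′(λ))²/(u(λ)² − 1) + (u(λ)² − 1)·(φ′(λ))² = 0, where ′ denotes the derivative with respect to λ. -/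
open Real

/-!
With `a = 1 - ℓ²` one has `t′ = a / (1 + λ²a²)`, `φ′ = aℓ / (ℓ² + λ²a²)`, `u² = (1 + λ²a²) / a`,
`u′ = λa / u` and `u² − 1 = (ℓ² + λ²a²) / a`. Substituting, the null condition reduces to
`λ²a³ (a + ℓ² − 1) = 0`.
-/

theorem deriv_const_add_arctan_mul (c k x : ℝ) :
    deriv (fun y => c + arctan (y * k)) x = k / (1 + (x * k) ^ 2) := by
  have h : HasDerivAt (fun y : ℝ => y * k) k x := by
    simpa using (hasDerivAt_id x).mul_const k
  have h' : HasDerivAt (fun y => c + arctan (y * k)) (1 / (1 + (x * k) ^ 2) * k) x :=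
    h.arctan.const_add c
  rw [h'.deriv]
  ring

theorem deriv_sqrt_sq_mul_add {a b x : ℝ} (h : x ^ 2 * a + b ≠ 0) :
    deriv (fun y => √(y ^ 2 * a + b)) x = x * a / √(x ^ 2 * a + b) := by
  have hq : HasDerivAt (fun y : ℝ => y ^ 2 * a + b) (2 * x * a) x := by
    simpa using ((hasDerivAt_pow 2 x).mul_const a).add_const b
  rw [(hq.sqrt h).deriv]
  field_simp

theorem adS3_null_identity {a l : ℝ} (lam : ℝ) (ha : 0 < a) (hl : l ≠ 0) (hal : a + l ^ 2 = 1) :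
    -(lam ^ 2 * a + 1 / a) * (a / (1 + (lam * a) ^ 2)) ^ 2
      + (lam * a / √(lam ^ 2 * a + 1 / a)) ^ 2 / (lam ^ 2 * a + 1 / a - 1)
      + (lam ^ 2 * a + 1 / a - 1) * (a / l / (1 + (lam * (a / l)) ^ 2)) ^ 2 = 0 := by
  have hU : 0 < lam ^ 2 * a + 1 / a := by positivity
  have hU1 : lam ^ 2 * a + 1 / a - 1 = (lam ^ 2 * a ^ 2 + l ^ 2) / a := by
    field_simp
    linear_combination (-1) * hal
  rw [div_pow (lam * a), sq_sqrt hU.le, hU1]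
  field_simp
  obtain rfl : a = 1 - l ^ 2 := by linear_combination hal
  ring

/-- The curves `t(λ) = t₀ + π/2 + arctan(λ(1−ℓ²))`,
`φ(λ) = φ₀ + π/2 + arctan(λ(1−ℓ²)/ℓ)`, `u(λ) = √(λ²(1−ℓ²) + 1/(1−ℓ²))`
(with `−1 < ℓ < 1`, `ℓ ≠ 0`) are null for the AdS₂₊₁ metric:
`−u²·t′² + u′²/(u² − 1) + (u² − 1)·φ′² = 0`. -/
theorem null_geodesic_AdS3 (l t₀ φ₀ : ℝ) (hl1 : -1 < l) (hl2 : l < 1) (hl0 : l ≠ 0)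
    (t φ u : ℝ → ℝ)
    (ht : ∀ lam, t lam = t₀ + π / 2 + arctan (lam * (1 - l ^ 2)))
    (hφ : ∀ lam, φ lam = φ₀ + π / 2 + arctan (lam * (1 - l ^ 2) / l))
    (hu : ∀ lam, u lam = Real.sqrt (lam ^ 2 * (1 - l ^ 2) + 1 / (1 - l ^ 2))) :
    ∀ lam : ℝ,
      -(u lam) ^ 2 * (deriv t lam) ^ 2 + (deriv u lam) ^ 2 / ((u lam) ^ 2 - 1)
        + ((u lam) ^ 2 - 1) * (deriv φ lam) ^ 2 = 0 := by
  intro lam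
  have ha : 0 < 1 - l ^ 2 := by nlinarith
  have hU : 0 < lam ^ 2 * (1 - l ^ 2) + 1 / (1 - l ^ 2) := by positivity
  simp only [mul_div_assoc] at hφ
  rw [funext ht, funext hφ, funext hu, deriv_const_add_arctan_mul, deriv_const_add_arctan_mul,
    deriv_sqrt_sq_mul_add hU.ne', sq_sqrt hU.le]
  exact adS3_null_identity lam ha hl0 (by ring)
end

section
/- Let x, α be real with 0 < x, 0 < α, and θ := α + x/2 < π/2. For ℓ ∈ (−1,1) define u(ℓ) = √((1 + ℓ²·cot²θ)/(1 − ℓ²)), F(ℓ) = 3x/2 + α − (π/2 − arctan(ℓ·cot θ)) − (π/2 − arccos(1/u(ℓ))), and G(ℓ) = π − α + x/2 − (π/2 − arctan(ℓ·cot θ)) − (π/2 + arccos(1/u(ℓ))). Then for every ℓ ∈ (−1,1): F(ℓ) = G(ℓ) if and only if ℓ² = cos²θ/(1 + cos²θ), i.e. ℓ = ±1/√(1 + sec²θ). -/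
open Real

/-!
`F − G = x + 2α − π + 2 arccos (1/u)`, so the crossing condition is `arccos (1/u) = π/2 − θ`,
i.e. `arcsin (1/u) = θ`, i.e. `u = 1/sin θ`. Squaring and clearing denominators turns this into
`sin²θ + ℓ² cos²θ = 1 − ℓ²`, which by `sin²θ + cos²θ = 1` is `ℓ² (1 + cos²θ) = cos²θ`.
-/

lemma arccos_eq_pi_div_two_sub_iff {y θ : ℝ} (hθ : θ ∈ Set.Ioo (-(π / 2)) (π / 2)) :
    arccos y = π / 2 - θ ↔ y = sin θ := by
  rw [arccos_eq_pi_div_two_sub_arcsin, sub_right_inj]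
  exact arcsin_eq_iff_eq_sin hθ

lemma div_one_sub_sq_eq_inv_sq_iff {s c l : ℝ} (hs : s ≠ 0) (hsc : s ^ 2 + c ^ 2 = 1)
    (hl : l ^ 2 ≠ 1) :
    (1 + l ^ 2 * (c / s) ^ 2) / (1 - l ^ 2) = s⁻¹ * s⁻¹ ↔ l ^ 2 = c ^ 2 / (1 + c ^ 2) := by
  have hl' : 1 - l ^ 2 ≠ 0 := sub_ne_zero.mpr (Ne.symm hl)
  have hc : 1 + c ^ 2 ≠ 0 := by positivity
  rw [div_eq_iff hl', eq_div_iff hc]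
  field_simp
  exact ⟨fun h => by linear_combination h - hsc, fun h => by linear_combination h + hsc⟩

lemma one_div_sqrt_eq_sin_iff {θ l : ℝ} (hs : 0 < sin θ) (hl : l ^ 2 ≠ 1) :
    1 / √((1 + l ^ 2 * (cos θ / sin θ) ^ 2) / (1 - l ^ 2)) = sin θ ↔
      l ^ 2 = cos θ ^ 2 / (1 + cos θ ^ 2) := by
  rw [one_div, inv_eq_iff_eq_inv, sqrt_eq_iff_mul_self_eq_of_pos (inv_pos.mpr hs),
    eq_comm]
  exact div_one_sub_sq_eq_inv_sq_iff hs.ne' (sin_sq_add_cos_sq θ) hl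

/-- The time-budget functions `F`, `G` of Appendix C satisfy, for `ℓ ∈ (−1,1)`,
`F(ℓ) = G(ℓ)` iff `ℓ² = cos²θ/(1 + cos²θ)` (i.e. `ℓ = ±1/√(1 + sec²θ)`),
where `θ = α + x/2`. -/
theorem crossing_point_F_eq_G (x α θ : ℝ) (hx : 0 < x) (hα : 0 < α)
    (hθ : θ = α + x / 2) (hθ2 : θ < π / 2)
    (u F G : ℝ → ℝ)
    (hu : ∀ l, u l = Real.sqrt ((1 + l ^ 2 * (cos θ / sin θ) ^ 2) / (1 - l ^ 2)))
    (hF : ∀ l, F l = 3 * x / 2 + α - (π / 2 - arctan (l * (cos θ / sin θ)))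
        - (π / 2 - arccos (1 / u l)))
    (hG : ∀ l, G l = π - α + x / 2 - (π / 2 - arctan (l * (cos θ / sin θ)))
        - (π / 2 + arccos (1 / u l))) :
    ∀ l : ℝ, -1 < l → l < 1 →
      (F l = G l ↔ l ^ 2 = cos θ ^ 2 / (1 + cos θ ^ 2)) := by
  intro l hl₁ hl₂
  have hθ₀ : 0 < θ := by linarith
  have hs : 0 < sin θ := sin_pos_of_pos_of_lt_pi hθ₀ (by linarith [pi_pos])
  have hl : l ^ 2 ≠ 1 := by nlinarith
  calc F l = G l ↔ arccos (1 / u l) = π / 2 - θ := by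
        rw [hF, hG, hθ]
        constructor <;> intro h <;> linarith
    _ ↔ 1 / u l = sin θ := arccos_eq_pi_div_two_sub_iff ⟨by linarith [pi_pos], hθ2⟩
    _ ↔ l ^ 2 = cos θ ^ 2 / (1 + cos θ ^ 2) := by
        rw [hu]
        exact one_div_sqrt_eq_sin_iff hs hl
end

section
/- Let x, α be real with 0 < x ≤ π/2, 0 < α, and θ := α + x/2 < π/2. For ℓ ∈ (−1,1) define u(ℓ) = √((1 + ℓ²·cot²θ)/(1 − ℓ²)) and F(ℓ) = 3x/2 + α − (π/2 − arctan(ℓ·cot θ)) − (π/2 − arccos(1/u(ℓ))). Set ℓ* = 1/√(1 + sec²θ). Then F(ℓ*) ≥ 0 if and only if cot²θ ≥ cot²(x)·(1 + sec²θ). -/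
open Real

/-!
At `ℓ* = 1/√(1 + sec²θ)` the argument of the square root in `u` collapses to `1/sin²θ`,
so `arccos (1/u ℓ*) = arccos (sin θ) = π/2 - θ` and
`F ℓ* = x - π/2 + arctan (cot θ / √(1 + sec²θ))`. Since `π/2 - x` lies in the range of
`arctan`, `F ℓ* ≥ 0` says `cot x = tan (π/2 - x) ≤ cot θ / √(1 + sec²θ)`, and squaring both
(nonnegative) sides gives the claim.
-/

lemma arccos_sin {θ : ℝ} (h₁ : -(π / 2) ≤ θ) (h₂ : θ ≤ π / 2) :
    arccos (sin θ) = π / 2 - θ := by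
  rw [arccos_eq_pi_div_two_sub_arcsin, arcsin_sin h₁ h₂]

lemma le_arctan_iff_tan_le {y t : ℝ} (h₁ : -(π / 2) < y) (h₂ : y < π / 2) :
    y ≤ arctan t ↔ tan y ≤ t := by
  conv_lhs => rw [← arctan_tan h₁ h₂]
  exact arctan_le_arctan_iff

lemma le_div_sqrt_iff_sq_mul_le {a c s : ℝ} (ha : 0 ≤ a) (hc : 0 ≤ c) (hs : 0 < s) :
    a ≤ c / √s ↔ a ^ 2 * s ≤ c ^ 2 := by
  rw [le_div_iff₀ (sqrt_pos.2 hs), ← sq_le_sq₀ (by positivity) hc, mul_pow, sq_sqrt hs.le]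

lemma one_add_sq_mul_cot_sq_div_one_sub_sq {θ : ℝ} (hsin : sin θ ≠ 0) (hcos : cos θ ≠ 0) :
    (1 + (1 / √(1 + (1 / cos θ) ^ 2)) ^ 2 * (cos θ / sin θ) ^ 2)
      / (1 - (1 / √(1 + (1 / cos θ) ^ 2)) ^ 2) = (1 / sin θ) ^ 2 := by
  rw [div_pow, one_pow, sq_sqrt (by positivity)]
  field_simp
  linear_combination (cos θ ^ 2 + 1) * sin_sq_add_cos_sq θ

/-- Substituting `ℓ* = 1/√(1 + sec²θ)` into the time-budget function `F`:
`F(ℓ*) ≥ 0` iff `cot²θ ≥ cot²(x)·(1 + sec²θ)`, where `θ = α + x/2`. -/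
theorem F_at_crossing_nonneg_iff (x α θ : ℝ) (hx : 0 < x) (hx' : x ≤ π / 2) (hα : 0 < α)
    (hθ : θ = α + x / 2) (hθ2 : θ < π / 2)
    (u F : ℝ → ℝ)
    (hu : ∀ l, u l = Real.sqrt ((1 + l ^ 2 * (cos θ / sin θ) ^ 2) / (1 - l ^ 2)))
    (hF : ∀ l, F l = 3 * x / 2 + α - (π / 2 - arctan (l * (cos θ / sin θ)))
        - (π / 2 - arccos (1 / u l)))
    (lstar : ℝ) (hlstar : lstar = 1 / Real.sqrt (1 + (1 / cos θ) ^ 2)) :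
    F lstar ≥ 0 ↔
      (cos θ / sin θ) ^ 2 ≥ (cos x / sin x) ^ 2 * (1 + (1 / cos θ) ^ 2) := by
  have hθ0 : 0 < θ := by linarith
  have hcos : 0 < cos θ := cos_pos_of_mem_Ioo ⟨by linarith, hθ2⟩
  have hsin : 0 < sin θ := sin_pos_of_pos_of_lt_pi hθ0 (by linarith)
  have hsinx : 0 < sin x := sin_pos_of_pos_of_lt_pi hx (by linarith)
  have hcosx : 0 ≤ cos x := cos_nonneg_of_mem_Icc ⟨by linarith, hx'⟩
  have hu_lstar : u lstar = 1 / sin θ := by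
    rw [hu, hlstar, one_add_sq_mul_cot_sq_div_one_sub_sq hsin.ne' hcos.ne',
      sqrt_sq (by positivity)]
  have hF_lstar :
      F lstar = x - (π / 2 - arctan ((cos θ / sin θ) / √(1 + (1 / cos θ) ^ 2))) := by
    rw [hF, hu_lstar, one_div_one_div, arccos_sin (by linarith) hθ2.le, hlstar,
      one_div_mul_eq_div, hθ]
    ring
  rw [hF_lstar, ge_iff_le, sub_nonneg, sub_le_comm,
    le_arctan_iff_tan_le (by linarith) (by linarith), tan_pi_div_two_sub, tan_eq_sin_div_cos,
    inv_div,
    le_div_sqrt_iff_sq_mul_le (by positivity) (by positivity) (by positivity)]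
end

section
/- Define the causal order on the flat cylinder ℝ × (ℝ/2πℤ), represented on ℝ × ℝ, by (t, φ) ≼ (t', φ') if and only if there exists an integer k with |φ' − φ + 2πk| ≤ t' − t. Let α, x be real with 0 < α, 0 < x, and α + x < π, and set c₁ = (−x/2, −α − x/2), c₂ = (−x/2, α + x/2), r₁ = (α + x, 0), r₂ = (π − α, π). Then there is no point p ∈ ℝ × ℝ with c₁ ≼ p, c₂ ≼ p, p ≼ r₁, and p ≼ r₂. -/
open Real

/-- The causal order of the flat cylinder `ℝ × (ℝ/2πℤ)`, represented on `ℝ × ℝ`: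
`(t, φ) ≼ (t', φ')` iff there is an integer `k` with `|φ' − φ + 2πk| ≤ t' − t`. -/
def CylCausal (p q : ℝ × ℝ) : Prop :=
  ∃ k : ℤ, |q.2 - p.2 + 2 * π * k| ≤ q.1 - p.1

/-!
Let `p = (t, φ)` and let `u = φ - 2πk` be the lift of `φ` witnessing `p ≼ r₁`, so
`|u| ≤ α + x - t`. Every lift of the antipode `π` lies at distance at least `π` from `0`, so
`p ≼ r₂` forces `π - |u| ≤ π - α - t`; hence `α + t ≤ |u| ≤ α + x - t`. The input on the side
opposite to `u` (`c₁` if `u ≥ 0`, `c₂` otherwise) is then at angular offset `|u| + α + x/2`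
from `p`, strictly between `t + x/2` and `2π - (t + x/2)`, so none of its lifts is close
enough to precede `p`.
-/

lemma pi_le_abs_pi_add_two_pi_mul_int (m : ℤ) : π ≤ |π + 2 * π * m| := by
  have hodd : (1 : ℝ) ≤ |1 + 2 * (m : ℝ)| := by
    exact_mod_cast Int.one_le_abs (show 1 + 2 * m ≠ 0 by omega)
  calc π = π * 1 := (mul_one π).symm
    _ ≤ π * |1 + 2 * (m : ℝ)| := mul_le_mul_of_nonneg_left hodd pi_pos.le
    _ = |π + 2 * π * m| := by rw [← abs_of_pos pi_pos, ← abs_mul, abs_of_pos pi_pos]; ring_nf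

lemma lt_abs_add_two_pi_mul_int {r v : ℝ} (hr : r < v) (hv : v < 2 * π - r) (n : ℤ) :
    r < |v + 2 * π * n| := by
  rcases lt_trichotomy n 0 with hn | rfl | hn
  · have hn' : (n : ℝ) ≤ -1 := by exact_mod_cast Int.le_sub_one_of_lt hn
    have : 2 * π * n ≤ -(2 * π) := by nlinarith [pi_pos]
    exact lt_abs.2 (Or.inr (by linarith))
  · simpa using hr.trans_le (le_abs_self v)
  · have hn' : (1 : ℝ) ≤ n := by exact_mod_cast hn
    have : 2 * π ≤ 2 * π * n := by nlinarith [pi_pos]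
    exact lt_abs.2 (Or.inl (by linarith [pi_pos]))

theorem boundary_central_region_empty_general (α x : ℝ) (hα : 0 < α)
    (hαx : α + x < π) :
    ¬ ∃ p : ℝ × ℝ,
      CylCausal (-x / 2, -α - x / 2) p ∧
      CylCausal (-x / 2, α + x / 2) p ∧
      CylCausal p (α + x, 0) ∧
      CylCausal p (π - α, π) := by
  rintro ⟨⟨t, φ⟩, ⟨k₁, h₁⟩, ⟨k₂, h₂⟩, ⟨k₃, h₃⟩, ⟨k₄, h₄⟩⟩
  simp only at h₁ h₂ h₃ h₄
  set u := φ - 2 * π * k₃ with hu_def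
  have hu_le : |u| ≤ α + x - t := by
    rw [abs_sub_comm]; simpa [sub_eq_neg_add] using h₃
  have hu_ge : α + t ≤ |u| := by
    have hanti : π ≤ |π - φ + 2 * π * k₄| + |u| :=
      calc π ≤ |π + 2 * π * ↑(k₄ - k₃)| := pi_le_abs_pi_add_two_pi_mul_int _
        _ = |(π - φ + 2 * π * k₄) + u| := by rw [hu_def]; push_cast; ring_nf
        _ ≤ |π - φ + 2 * π * k₄| + |u| := abs_add_le _ _
    linarith
  have hfar := lt_abs_add_two_pi_mul_int (r := t + x / 2) (v := |u| + α + x / 2)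
    (by linarith) (by linarith)
  rcases abs_cases u with ⟨hu, -⟩ | ⟨hu, -⟩
  · have := hfar (k₁ + k₃)
    have heq : |u| + α + x / 2 + 2 * π * ↑(k₁ + k₃) = φ - (-α - x / 2) + 2 * π * k₁ := by
      rw [hu, hu_def]; push_cast; ring
    rw [heq] at this
    linarith
  · have := hfar (-(k₂ + k₃))
    have heq : |u| + α + x / 2 + 2 * π * ↑(-(k₂ + k₃)) = -(φ - (α + x / 2) + 2 * π * k₂) := by
      rw [hu, hu_def]; push_cast; ring
    rw [heq, abs_neg] at this
    linarith

/-- For `0 < α`, `0 < x`, `α + x < π`, the boundary central region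
`Ĵ⁺(c₁) ∩ Ĵ⁺(c₂) ∩ Ĵ⁻(r₁) ∩ Ĵ⁻(r₂)` of the B₈₄ configuration is empty. -/
theorem boundary_central_region_empty (α x : ℝ) (hα : 0 < α) (hx : 0 < x)
    (hαx : α + x < π) :
    ¬ ∃ p : ℝ × ℝ,
      CylCausal (-x / 2, -α - x / 2) p ∧
      CylCausal (-x / 2, α + x / 2) p ∧
      CylCausal p (α + x, 0) ∧
      CylCausal p (π - α, π) :=
  boundary_central_region_empty_general α x hα hαx
end
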